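/- arXiv:1402.1194 — 6 statements merged into one kernel-verified Lean document; each statement's English description precedes it below -/
import Mathlib

section
/- For all real numbers p and m with 0 < p < 1/e and m ≥ 3, the inequality 1 − (1 − p)^m ≤ (m / log₂ m) · p · log₂(1/p) holds. -/
/-!
If `m p ≤ 1`, Bernoulli's inequality gives `1 - (1 - p)^m ≤ m p`, and `m ≤ 1/p` gives
`log m ≤ log (1/p)`. If `m p ≥ 1`, the left side is at most `1`, and with `t = m p` the claim
`log m ≤ t log (1/p) = t (log m - log t)` follows from `log m ≥ log t + 1` (as `p ≤ 1/e`)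
together with `log t ≤ t - 1`.
-/

open Real

lemma one_sub_one_sub_rpow_le_mul {p m : ℝ} (hp1 : p ≤ 1) (hm : 1 ≤ m) :
    1 - (1 - p) ^ m ≤ m * p := by
  have bernoulli := one_add_mul_self_le_rpow_one_add (s := -p) (by linarith) hm
  rw [← sub_eq_add_neg, mul_neg, ← sub_eq_add_neg] at bernoulli
  linarith

lemma log_le_mul_mul_log_one_div {p m : ℝ} (hp0 : 0 < p) (hpe : p ≤ 1 / exp 1)
    (hmp : 1 ≤ m * p) : log m ≤ m * p * log (1 / p) := by
  set t := m * p with ht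
  have hm0 : 0 < m := pos_of_mul_pos_left (by linarith) hp0.le
  have hlog_inv : log (1 / p) = log m - log t := by
    rw [ht, log_mul hm0.ne' hp0.ne', one_div, log_inv]
    ring
  have hlog_m : log t + 1 ≤ log m := by
    have ht_le : t ≤ m / exp 1 := by
      rw [ht, div_eq_mul_one_div]
      exact mul_le_mul_of_nonneg_left hpe hm0.le
    have := log_le_log (by linarith) ht_le
    rwa [log_div hm0.ne' (exp_ne_zero 1), log_exp, le_sub_iff_add_le] at this
  have hlog_t : log t ≤ t - 1 := log_le_sub_one_of_pos (by linarith)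
  have hlog_t0 : 0 ≤ log t := log_nonneg hmp
  rw [hlog_inv]
  nlinarith

/-- For `0 < p < 1/e` and `m ≥ 3`: `1 - (1-p)^m ≤ (m / log₂ m) · p · log₂(1/p)`. -/
theorem coupon_pointwise_ineq (p m : ℝ) (hp0 : 0 < p) (hpe : p < 1 / Real.exp 1)
    (hm : 3 ≤ m) :
    1 - (1 - p) ^ m ≤ (m / Real.logb 2 m) * p * Real.logb 2 (1 / p) := by
  have hp1 : p < 1 := hpe.trans ((div_lt_one (exp_pos 1)).2 (by linarith [add_one_le_exp (1 : ℝ)]))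
  have hlog_m : 0 < log m := log_pos (by linarith)
  have hrhs : m / logb 2 m * p * logb 2 (1 / p) = m * p * log (1 / p) / log m := by
    have : log 2 ≠ 0 := (log_pos one_lt_two).ne'
    simp only [logb]
    field_simp
  rw [hrhs, le_div_iff₀ hlog_m]
  rcases le_total (m * p) 1 with hmp | hmp
  · have hm_le : m ≤ 1 / p := by rwa [le_div_iff₀ hp0]
    calc (1 - (1 - p) ^ m) * log m ≤ m * p * log m := by
          gcongr
          exact one_sub_one_sub_rpow_le_mul hp1.le (by linarith)
      _ ≤ m * p * log (1 / p) := by gcongr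
  · have hpow : 0 ≤ (1 - p) ^ m := rpow_nonneg (by linarith) m
    calc (1 - (1 - p) ^ m) * log m ≤ log m := by nlinarith
      _ ≤ m * p * log (1 / p) := log_le_mul_mul_log_one_div hp0 hpe.le hmp
end

section
/- Let C be a nonempty finite index set, let p : C → ℝ satisfy p(o) > 0 for every o ∈ C and Σ_{o ∈ C} p(o) = 1, and let m be a natural number with m ≥ 3. Then Σ_{o ∈ C} (1 − (1 − p(o))^m) ≤ (m / log₂ m) · Σ_{o ∈ C} p(o) · log₂(1/p(o)) + 3. (Interpretation: in the coupon collector's setting where coupon o is drawn with probability p(o) in each of m independent draws, the expected number of distinct coupons collected is at most (m/log₂ m)·H_C + 3, where H_C = Σ_o p(o)·log₂(1/p(o)) is the Shannon entropy of the coupon distribution.) -/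
open Real

lemma aux_mono {a b : ℝ} (ha : 0 ≤ a) (hab : a ≤ b) (hb : b ≤ 1/3) :
    Real.negMulLog a ≤ Real.negMulLog b := by
  have he3 : Real.exp 1 < 3 := by
    calc Real.exp 1 < 2.7182818286 := Real.exp_one_lt_d9
    _ < 3 := by norm_num
  have h3 : (1:ℝ)/3 < Real.exp (-1) := by
    rw [Real.exp_neg, lt_inv_comm₀ (by norm_num) (Real.exp_pos _)]
    simpa using he3
  have mono : StrictMonoOn Real.negMulLog (Set.Icc 0 (1/3)) := by
    apply strictMonoOn_of_deriv_pos (convex_Icc _ _)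
      (Real.continuous_negMulLog.continuousOn)
    intro x hx
    rw [interior_Icc] at hx
    rw [Real.deriv_negMulLog (ne_of_gt hx.1)]
    have hlt : Real.log x < -1 := by
      have := Real.log_lt_log hx.1 (lt_of_lt_of_le hx.2 (le_of_lt h3))
      rwa [Real.log_exp] at this
    linarith
  rcases eq_or_lt_of_le hab with rfl | h
  · exact le_rfl
  · exact (mono ⟨ha, hab.trans hb⟩ ⟨ha.trans hab, hb⟩ h).le

lemma pointwise (m : ℕ) (hm : 3 ≤ m) {q : ℝ} (hq : 0 < q) (hq1 : q ≤ 1) :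
    1 - (1 - q) ^ m ≤ ((m : ℝ) / Real.logb 2 m) * (q * Real.logb 2 (1 / q)) + 3 * q := by
  have hm3 : (3:ℝ) ≤ (m:ℝ) := by exact_mod_cast hm
  have hL : 0 < Real.logb 2 (m:ℝ) := Real.logb_pos one_lt_two (by linarith)
  have hlogb_nonneg : 0 ≤ Real.logb 2 (1/q) :=
    Real.logb_nonneg one_lt_two (by rw [le_div_iff₀ hq]; linarith)
  rcases le_or_gt q (1/(m:ℝ)) with h1 | h1
  · -- Bernoulli case
    have hber : 1 + (m:ℝ) * (-q) ≤ (1 + (-q)) ^ m :=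
      one_add_mul_le_pow (by linarith) m
    have hlhs : 1 - (1 - q) ^ m ≤ (m:ℝ) * q := by
      have : (1 : ℝ) + -q = 1 - q := by ring
      rw [this] at hber; linarith
    have hlog : Real.logb 2 (m:ℝ) ≤ Real.logb 2 (1/q) := by
      apply Real.logb_le_logb_of_le one_lt_two (by linarith)
      rw [le_div_iff₀ hq]
      rw [le_div_iff₀ (by linarith : (0:ℝ) < (m:ℝ))] at h1
      linarith
    have : (m:ℝ) * q ≤ ((m:ℝ) / Real.logb 2 m) * (q * Real.logb 2 (1/q)) := by
      rw [div_mul_eq_mul_div, le_div_iff₀ hL]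
      have := mul_le_mul_of_nonneg_left hlog (by positivity : 0 ≤ (m:ℝ) * q)
      calc (m:ℝ) * q * Real.logb 2 (m:ℝ) = (m:ℝ) * q * Real.logb 2 (m:ℝ) := rfl
        _ ≤ (m:ℝ) * q * Real.logb 2 (1/q) := this
        _ = (m:ℝ) * (q * Real.logb 2 (1/q)) := by ring
    linarith
  · have hlhs : 1 - (1 - q) ^ m ≤ 1 := by
      have : (0:ℝ) ≤ (1 - q) ^ m := pow_nonneg (by linarith) m
      linarith
    have hterm : 0 ≤ ((m:ℝ) / Real.logb 2 m) * (q * Real.logb 2 (1/q)) := by positivity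
    rcases le_or_gt (1/3 : ℝ) q with h2 | h2
    · linarith
    · -- 1/m < q < 1/3
      have hlogm : 0 < Real.log (m:ℝ) := Real.log_pos (by linarith)
      have h2pos : 0 < Real.log 2 := Real.log_pos one_lt_two
      have key : Real.log (m:ℝ) / (m:ℝ) ≤ q * Real.log (1/q) := by
        have hmono := aux_mono (show (0:ℝ) ≤ 1/(m:ℝ) by positivity) h1.le h2.le
        simp only [Real.negMulLog, one_div, Real.log_inv] at hmono ⊢
        rw [div_eq_inv_mul]
        ring_nf at hmono ⊢
        linarith
      have heq : ((m:ℝ) / Real.logb 2 m) * (q * Real.logb 2 (1/q))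
          = ((m:ℝ) * (q * Real.log (1/q))) / Real.log (m:ℝ) := by
        rw [Real.logb, Real.logb]
        field_simp
      have : 1 ≤ ((m:ℝ) / Real.logb 2 m) * (q * Real.logb 2 (1/q)) := by
        rw [heq, le_div_iff₀ hlogm]
        have := mul_le_mul_of_nonneg_left key (by linarith : (0:ℝ) ≤ (m:ℝ))
        rw [mul_div_cancel₀] at this
        · linarith
        · linarith
      linarith

/-- Coupon collector's bound: the expected number of distinct coupons collected in `m ≥ 3`
draws is at most `(m / log₂ m) · H_C + 3` where `H_C` is the Shannon entropy of the coupon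
distribution. -/
theorem coupon_collector_expected_distinct {C : Type*} [Fintype C] [Nonempty C]
    (p : C → ℝ) (hp : ∀ o, 0 < p o) (hsum : ∑ o, p o = 1) (m : ℕ) (hm : 3 ≤ m) :
    ∑ o, (1 - (1 - p o) ^ (m : ℝ)) ≤
      ((m : ℝ) / Real.logb 2 (m : ℝ)) * ∑ o, p o * Real.logb 2 (1 / p o) + 3 := by
  have hple : ∀ o, p o ≤ 1 := fun o => by
    calc p o ≤ ∑ o, p o :=
          Finset.single_le_sum (fun i _ => (hp i).le) (Finset.mem_univ o)
      _ = 1 := hsum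
  have step : ∀ o, 1 - (1 - p o) ^ ((m:ℕ) : ℝ) ≤
      ((m : ℝ) / Real.logb 2 m) * (p o * Real.logb 2 (1 / p o)) + 3 * p o := by
    intro o
    rw [Real.rpow_natCast]
    exact pointwise m hm (hp o) (hple o)
  calc ∑ o, (1 - (1 - p o) ^ (m : ℝ))
      ≤ ∑ o, (((m : ℝ) / Real.logb 2 m) * (p o * Real.logb 2 (1 / p o)) + 3 * p o) :=
        Finset.sum_le_sum (fun o _ => step o)
    _ = ((m : ℝ) / Real.logb 2 (m : ℝ)) * ∑ o, p o * Real.logb 2 (1 / p o) + 3 := by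
        rw [Finset.sum_add_distrib, ← Finset.mul_sum, ← Finset.mul_sum, hsum, mul_one]
end

section
/- For all real numbers p and x with 0 < p < 1 and 0 < x ≤ 1, the inequality 1 − (1 − p)^(p^(−x)) ≤ p^(1−x) / x holds. (Equivalently, writing m = 1/p^x: 1 − (1 − p)^m ≤ 1/(x·p^(x−1)); this is the core inequality in the case m < 1/p of the coupon-collector lemma, with x = log_{1/p} m.) -/
/-- For `0 < p < 1` and `0 < x ≤ 1`: `1 - (1-p)^(p^(-x)) ≤ p^(1-x) / x`. -/
theorem coupon_core_ineq (p x : ℝ) (hp0 : 0 < p) (hp1 : p < 1) (hx0 : 0 < x)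
    (hx1 : x ≤ 1) :
    1 - (1 - p) ^ (p ^ (-x)) ≤ p ^ (1 - x) / x := by
  have hm : (1 : ℝ) ≤ p ^ (-x) := by
    rw [Real.rpow_neg hp0.le, le_inv_comm₀ one_pos (Real.rpow_pos_of_pos hp0 x)]
    simpa using Real.rpow_le_one hp0.le hp1.le hx0.le
  have hbern : 1 - p ^ (-x) * p ≤ (1 - p) ^ (p ^ (-x)) := by
    have := one_add_mul_self_le_rpow_one_add (s := -p) (by linarith) hm
    simpa [sub_eq_add_neg, mul_comm, mul_neg] using this
  have h1 : 1 - (1 - p) ^ (p ^ (-x)) ≤ p ^ (1 - x) := by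
    have : p ^ (-x) * p = p ^ (1 - x) := by
      rw [sub_eq_add_neg, Real.rpow_add hp0, Real.rpow_one, mul_comm]
    linarith
  calc 1 - (1 - p) ^ (p ^ (-x)) ≤ p ^ (1 - x) := h1
    _ ≤ p ^ (1 - x) / x := by
        rw [le_div_iff₀ hx0]
        nlinarith [Real.rpow_pos_of_pos hp0 (1 - x)]
end

section
/- Let δ, W, H₀ be real numbers with δ ≥ 2 and 0 < H₀ ≤ W, set u := W − log₂(W/H₀) and l := W − log₂(u / log₂ δ), and assume u > 0 and 0 < l ≤ W. Then δ^(2^(W−l)) = (H₀/W)·2^W, and consequently δ^(2^(W−l)) < (H₀/l)·2^W + 3. (This shows that the intersection level ζ of the upper bounds (H₀/j)·2^W + 3 and δ^(2^(W−j)) satisfies ζ ≤ W − log₂((W − log₂(W/H₀)) / log₂ δ).) -/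
/-- The intersection level `ζ` of the bounds `(H₀/j)·2^W + 3` and `δ^(2^(W-j))` satisfies
`ζ ≤ W - log₂((W - log₂(W/H₀))/log₂ δ)`: at `l = W - log₂(u/log₂ δ)` with
`u = W - log₂(W/H₀)` we have `δ^(2^(W-l)) = (H₀/W)·2^W < (H₀/l)·2^W + 3`. -/
theorem zeta_upper_bound (δ W H₀ : ℝ) (hδ : 2 ≤ δ) (hH0 : 0 < H₀) (hHW : H₀ ≤ W)
    (u l : ℝ) (hu : u = W - Real.logb 2 (W / H₀))
    (hl : l = W - Real.logb 2 (u / Real.logb 2 δ))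
    (hupos : 0 < u) (hlpos : 0 < l) (hlW : l ≤ W) :
    δ ^ ((2 : ℝ) ^ (W - l)) = (H₀ / W) * (2 : ℝ) ^ W ∧
    δ ^ ((2 : ℝ) ^ (W - l)) < (H₀ / l) * (2 : ℝ) ^ W + 3 := by
  have hδ1 : (1 : ℝ) < δ := lt_of_lt_of_le one_lt_two hδ
  have hδ0 : (0 : ℝ) < δ := lt_trans one_pos hδ1
  have hb : 0 < Real.logb 2 δ := Real.logb_pos one_lt_two hδ1
  have hq : 0 < u / Real.logb 2 δ := div_pos hupos hb
  have hWpos : 0 < W := lt_of_lt_of_le hH0 hHW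
  have hWH : 0 < W / H₀ := div_pos hWpos hH0
  have h1 : W - l = Real.logb 2 (u / Real.logb 2 δ) := by rw [hl]; ring
  have h2 : (2 : ℝ) ^ (W - l) = u / Real.logb 2 δ := by
    rw [h1, Real.rpow_logb two_pos (by norm_num) hq]
  have hδeq : δ = (2 : ℝ) ^ Real.logb 2 δ :=
    (Real.rpow_logb two_pos (by norm_num) hδ0).symm
  have hlog2 : Real.log 2 ≠ 0 := by
    positivity
  have hlogδ : Real.log δ ≠ 0 := ne_of_gt (Real.log_pos hδ1)
  have h3 : δ ^ ((2 : ℝ) ^ (W - l)) = (2 : ℝ) ^ u := by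
    rw [h2, Real.rpow_def_of_pos hδ0, Real.rpow_def_of_pos two_pos]
    congr 1
    rw [Real.logb]
    field_simp
  have h4 : (2 : ℝ) ^ u = (H₀ / W) * (2 : ℝ) ^ W := by
    rw [hu, Real.rpow_sub two_pos, Real.rpow_logb two_pos (by norm_num) hWH]
    field_simp
  have heq : δ ^ ((2 : ℝ) ^ (W - l)) = (H₀ / W) * (2 : ℝ) ^ W := h3.trans h4
  refine ⟨heq, ?_⟩
  rw [heq]
  have hle : H₀ / W ≤ H₀ / l := div_le_div_of_nonneg_left (le_of_lt hH0) hlpos hlW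
  have : (H₀ / W) * (2 : ℝ) ^ W ≤ (H₀ / l) * (2 : ℝ) ^ W :=
    mul_le_mul_of_nonneg_right hle (le_of_lt (Real.rpow_pos_of_pos two_pos W))
  linarith
end

section
/- Let δ and W be real numbers with δ ≥ 2 and W ≥ 2, set u := W − log₂ W and l := W − log₂(u / log₂ δ). Then δ^(2^(W−l)) = 2^u and 2^u ≤ 2^l. (This shows that the intersection level κ of the upper bounds 2^j and δ^(2^(W−j)) satisfies κ ≤ W − log₂((W − log₂ W)/log₂ δ).) -/
/-- The intersection level `κ` of the bounds `2^j` and `δ^(2^(W-j))` satisfies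
`κ ≤ W - log₂((W - log₂ W)/log₂ δ)`: at `l = W - log₂(u/log₂ δ)` with `u = W - log₂ W`
we have `δ^(2^(W-l)) = 2^u ≤ 2^l`. -/
theorem kappa_upper_bound (δ W : ℝ) (hδ : 2 ≤ δ) (hW : 2 ≤ W)
    (u l : ℝ) (hu : u = W - Real.logb 2 W)
    (hl : l = W - Real.logb 2 (u / Real.logb 2 δ)) :
    δ ^ ((2 : ℝ) ^ (W - l)) = (2 : ℝ) ^ u ∧ (2 : ℝ) ^ u ≤ (2 : ℝ) ^ l := by
  have h2 : (1 : ℝ) < 2 := one_lt_two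
  have hWpos : (0 : ℝ) < W := by linarith
  have hδpos : (0 : ℝ) < δ := by linarith
  have hlog2 : 0.6931471803 < Real.log 2 := Real.log_two_gt_d9
  have hlogδ : 1 ≤ Real.logb 2 δ := by
    have := Real.logb_le_logb_of_le one_lt_two two_pos hδ
    rwa [Real.logb_self_eq_one one_lt_two] at this
  have hlogδpos : 0 < Real.logb 2 δ := lt_of_lt_of_le one_pos hlogδ
  -- u > 0, i.e. logb 2 W < W
  have hupos : 0 < u := by
    have hs : Real.sqrt W ^ 2 = W := Real.sq_sqrt hWpos.le
    have hs0 : 0 < Real.sqrt W := Real.sqrt_pos.mpr hWpos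
    have hlogs : Real.log (Real.sqrt W) ≤ Real.sqrt W - 1 :=
      Real.log_le_sub_one_of_pos hs0
    have hlogW : Real.log W ≤ 2 * Real.sqrt W - 2 := by
      have := Real.log_sqrt hWpos.le
      linarith [hlogs, this]
    have hlt : Real.log W < W * Real.log 2 := by
      nlinarith [sq_nonneg (Real.sqrt W - 2), hs0.le]
    have : Real.logb 2 W < W := by
      rw [Real.logb, div_lt_iff₀ (by positivity)]
      linarith
    linarith [hu, this]
  have hx : 0 < u / Real.logb 2 δ := div_pos hupos hlogδpos
  have hWl : W - l = Real.logb 2 (u / Real.logb 2 δ) := by rw [hl]; ring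
  have hpow : (2 : ℝ) ^ (W - l) = u / Real.logb 2 δ := by
    rw [hWl]; exact Real.rpow_logb two_pos (by norm_num) hx
  constructor
  · rw [hpow]
    have hδeq : δ = (2 : ℝ) ^ Real.logb 2 δ :=
      (Real.rpow_logb two_pos (by norm_num) hδpos).symm
    calc δ ^ (u / Real.logb 2 δ)
        = ((2 : ℝ) ^ Real.logb 2 δ) ^ (u / Real.logb 2 δ) := by rw [← hδeq]
      _ = (2 : ℝ) ^ (Real.logb 2 δ * (u / Real.logb 2 δ)) :=
          (Real.rpow_mul (by norm_num) _ _).symm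
      _ = (2 : ℝ) ^ u := by rw [mul_div_cancel₀ _ (ne_of_gt hlogδpos)]
  · apply Real.rpow_le_rpow_left_iff h2 |>.mpr
    have h1 : u / Real.logb 2 δ ≤ u := div_le_self hupos.le hlogδ
    have h2' : u ≤ W := by
      have : 0 ≤ Real.logb 2 W := Real.logb_nonneg h2 (by linarith)
      linarith [hu]
    have h3 : Real.logb 2 (u / Real.logb 2 δ) ≤ Real.logb 2 W :=
      Real.logb_le_logb_of_le one_lt_two hx (le_trans h1 h2')
    linarith [hu, hl, h3]
end

section
/- Let W, H₀, λ be real numbers with λ > 0, 0 < H₀ ≤ W, and λ·2^λ = H₀·2^W. Then λ ≤ W and λ ≥ W − log₂(W/H₀), so that 2^(W−λ) ≤ W/H₀. (This is the key fact behind the O(W·(1 + 1/H₀)) update-time bound for prefix DAGs with the leaf-push barrier set by the equation λ·2^λ = H₀·n, n = 2^W.) -/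
/-- If the leaf-push barrier `λ > 0` satisfies `λ·2^λ = H₀·2^W` with `0 < H₀ ≤ W`, then
`λ ≤ W`, `λ ≥ W - log₂(W/H₀)`, and hence `2^(W-λ) ≤ W/H₀`. -/
theorem leaf_push_barrier_bounds (W H₀ lam : ℝ) (hlam : 0 < lam) (hH0 : 0 < H₀)
    (hHW : H₀ ≤ W) (heq : lam * (2 : ℝ) ^ lam = H₀ * (2 : ℝ) ^ W) :
    lam ≤ W ∧ W - Real.logb 2 (W / H₀) ≤ lam ∧ (2 : ℝ) ^ (W - lam) ≤ W / H₀ := by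
  have hW : 0 < W := lt_of_lt_of_le hH0 hHW
  have h2l : (0:ℝ) < (2:ℝ) ^ lam := Real.rpow_pos_of_pos (by norm_num) _
  have h2W : (0:ℝ) < (2:ℝ) ^ W := Real.rpow_pos_of_pos (by norm_num) _
  have hlW : lam ≤ W := by
    by_contra h
    push_neg at h
    have h1 : (2:ℝ) ^ W < (2:ℝ) ^ lam :=
      Real.rpow_lt_rpow_left_iff (by norm_num : (1:ℝ) < 2) |>.mpr h
    nlinarith [heq]
  have hkey : (2:ℝ) ^ (W - lam) = lam / H₀ := by
    rw [Real.rpow_sub (by norm_num)]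
    field_simp
    nlinarith [heq]
  have h3 : (2:ℝ) ^ (W - lam) ≤ W / H₀ := by
    rw [hkey]; gcongr
  refine ⟨hlW, ?_, h3⟩
  have hlog : W - lam ≤ Real.logb 2 (W / H₀) := by
    calc W - lam = Real.logb 2 ((2:ℝ) ^ (W - lam)) := (Real.logb_rpow (by norm_num) (by norm_num)).symm
      _ ≤ Real.logb 2 (W / H₀) := Real.logb_le_logb_of_le (by norm_num) (Real.rpow_pos_of_pos (by norm_num) _) h3
  linarith
end
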